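/- Let G : ℝ → ℝ be continuous, non-increasing, and satisfy |G(s) - G(t)| < |s - t| for all s ≠ t. If G has a fixed point t̄ (G(t̄) = t̄), then for any initial value t₁, the sequence defined by t_{j+1} = G(t_j) converges to t̄. -/

import Mathlib

/-!
The distance from the iterates to the fixed point `p` decreases, hence converges to some `L`.
The orbit is bounded, so in a proper space a subsequence converges to some `x`, and continuity
gives `dist x p = L = dist (f x) p`. Strict contraction towards `p` then forces `x = p`, so `L = 0`.
-/

open Filter Topology

section Contractive

variable {X : Type*} [MetricSpace X] {f : X → X} {p : X}

theorem lipschitzWith_one_of_dist_lt (hf : ∀ x y, x ≠ y → dist (f x) (f y) < dist x y) :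
    LipschitzWith 1 f :=
  LipschitzWith.of_dist_le_mul fun x y => by
    rcases eq_or_ne x y with rfl | hxy
    · simp
    · simpa using (hf x y hxy).le

theorem antitone_dist_fixedPoint_of_dist_le (hp : f p = p) (hf : ∀ x, dist (f x) (f p) ≤ dist x p)
    {u : ℕ → X} (hu : ∀ n, u (n + 1) = f (u n)) : Antitone fun n => dist (u n) p :=
  antitone_nat_of_succ_le fun n => by simpa only [hu, hp] using hf (u n)

theorem tendsto_fixedPoint_of_dist_lt [ProperSpace X]
    (hf : ∀ x y, x ≠ y → dist (f x) (f y) < dist x y) (hp : f p = p)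
    {u : ℕ → X} (hu : ∀ n, u (n + 1) = f (u n)) : Tendsto u atTop (𝓝 p) := by
  have hlip : LipschitzWith 1 f := lipschitzWith_one_of_dist_lt hf
  have hanti : Antitone fun n => dist (u n) p :=
    antitone_dist_fixedPoint_of_dist_le hp (fun x => by simpa using hlip.dist_le_mul x p) hu
  obtain ⟨L, hL⟩ : ∃ L, Tendsto (fun n => dist (u n) p) atTop (𝓝 L) :=
    ⟨_, tendsto_atTop_ciInf hanti ⟨0, Set.forall_mem_range.2 fun _ => dist_nonneg⟩⟩
  have hbounded : ∀ n, u n ∈ Metric.closedBall p (dist (u 0) p) := fun n => hanti n.zero_le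
  obtain ⟨x, -, φ, hφ, hx⟩ := (isCompact_closedBall p _).tendsto_subseq hbounded
  have hxL : dist x p = L :=
    tendsto_nhds_unique (hx.dist tendsto_const_nhds) (hL.comp hφ.tendsto_atTop)
  have hfxL : dist (f x) p = L := by
    refine tendsto_nhds_unique ((hlip.continuous.tendsto x |>.comp hx).dist tendsto_const_nhds) ?_
    simpa only [Function.comp_def, ← hu] using
      hL.comp (tendsto_atTop_mono (fun k => (φ k).le_succ) hφ.tendsto_atTop)
  have hxp : x = p := by
    by_contra hxp
    have := hf x p hxp
    rw [hp, hxL, hfxL] at this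
    exact this.false
  rw [← hxL, hxp, dist_self] at hL
  exact tendsto_iff_dist_tendsto_zero.2 hL

end Contractive

theorem stmt0_general (G : ℝ → ℝ)
    (hstrict : ∀ s t : ℝ, s ≠ t → |G s - G t| < |s - t|)
    (tbar : ℝ) (hfix : G tbar = tbar)
    (t : ℕ → ℝ) (hrec : ∀ j, t (j + 1) = G (t j)) :
    Filter.Tendsto t Filter.atTop (nhds tbar) :=
  tendsto_fixedPoint_of_dist_lt (by simpa only [Real.dist_eq] using hstrict) hfix hrec

theorem stmt0 (G : ℝ → ℝ) (hcont : Continuous G) (hanti : Antitone G)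
    (hstrict : ∀ s t : ℝ, s ≠ t → |G s - G t| < |s - t|)
    (tbar : ℝ) (hfix : G tbar = tbar)
    (t : ℕ → ℝ) (hrec : ∀ j, t (j + 1) = G (t j)) :
    Filter.Tendsto t Filter.atTop (nhds tbar) :=
  stmt0_general G hstrict tbar hfix t hrec
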